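/- For pure octonions a, b, x, one has (x*a)*b + (x*b)*a = 2⟨a,x⟩b + 2⟨b,x⟩a - 4⟨a,b⟩x. -/

import Mathlib

/-- An octonion algebra over `k`: an 8-dimensional unital (not necessarily associative)
`k`-algebra with a nondegenerate multiplicative quadratic form `N`. -/
structure OctonionAlgebra (k : Type) [Field k] (A : Type) [AddCommGroup A] [Module k A] where
  mul : A → A → A
  e : A
  N : A → k
  add_mul' : ∀ a b c : A, mul (a + b) c = mul a c + mul b c
  mul_add' : ∀ a b c : A, mul a (b + c) = mul a b + mul a c
  smul_mul' : ∀ (t : k) (a b : A), mul (t • a) b = t • mul a b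
  mul_smul' : ∀ (t : k) (a b : A), mul a (t • b) = t • mul a b
  one_mul' : ∀ a : A, mul e a = a
  mul_one' : ∀ a : A, mul a e = a
  dim_eq : Module.finrank k A = 8
  N_smul : ∀ (t : k) (a : A), N (t • a) = t ^ 2 * N a
  polar_add_left : ∀ a b c : A,
    N (a + b + c) - N (a + b) - N c = (N (a + c) - N a - N c) + (N (b + c) - N b - N c)
  polar_smul_left : ∀ (t : k) (a b : A),
    N (t • a + b) - N (t • a) - N b = t * (N (a + b) - N a - N b)
  nondeg : ∀ a : A, (∀ b : A, N (a + b) - N a - N b = 0) → a = 0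
  N_mul : ∀ a b : A, N (mul a b) = N a * N b

namespace OctonionAlgebra

variable {k : Type} [Field k] {A : Type} [AddCommGroup A] [Module k A]

/-- The bilinear form associated to the norm: `⟨x,y⟩ = N(x+y) - N(x) - N(y)`. -/
def inner (O : OctonionAlgebra k A) (x y : A) : k := O.N (x + y) - O.N x - O.N y

/-- The standard involution `x̄ = ⟨x,e⟩e - x`. -/
def conj (O : OctonionAlgebra k A) (x : A) : A := O.inner x O.e • O.e - x

/-- The Malcev product `a*b = ab - ba`. -/
def malcev (O : OctonionAlgebra k A) (a b : A) : A := O.mul a b - O.mul b a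

/-- The associator `{a,x,b} = (ax)b - a(xb)`. -/
def assoc (O : OctonionAlgebra k A) (a x b : A) : A :=
  O.mul (O.mul a x) b - O.mul a (O.mul x b)

/-- The standard derivation `D_{a,b} = [L_a,L_b] + [L_a,R_b] + [R_a,R_b]`, as a function. -/
def D (O : OctonionAlgebra k A) (a b x : A) : A :=
  O.mul a (O.mul b x) - O.mul b (O.mul a x)
  + O.mul a (O.mul x b) - O.mul (O.mul a x) b
  + O.mul (O.mul x b) a - O.mul (O.mul x a) b

end OctonionAlgebra


/-!
Write `t(u) = ⟨u,e⟩`. Linearizing the norm identities `N(xy) = N(x)N(y)` gives right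
alternativity `(ya)b + (yb)a = t(b)·ya + t(a)·yb - ⟨a,b⟩y`, and with `y = e` the formula
`u*v = 2uv - t(u)v - t(v)u + ⟨u,v⟩e` for the Malcev product. For pure `x, a` this gives
`x*a = 2xa + ⟨x,a⟩e`, and since `e` is central,
`(x*a)*b = 2(xa)*b = 4(xa)b + 2⟨a,x⟩b + 2⟨xa,b⟩e`. Symmetrizing in `a, b`, right
alternativity turns `4((xa)b + (xb)a)` into `-4⟨a,b⟩x`, and the `e`-terms cancel
because `L_x` is skew for pure `x`.
-/

namespace OctonionAlgebra

variable {k : Type} [Field k] {A : Type} [AddCommGroup A] [Module k A]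
  (O : OctonionAlgebra k A)

lemma inner_comm (x y : A) : O.inner x y = O.inner y x := by
  rw [inner, inner, add_comm x y]
  ring

lemma inner_add_left (x y z : A) : O.inner (x + y) z = O.inner x z + O.inner y z :=
  O.polar_add_left x y z

lemma inner_smul_left (t : k) (x y : A) : O.inner (t • x) y = t * O.inner x y :=
  O.polar_smul_left t x y

lemma inner_sub_left (x y z : A) : O.inner (x - y) z = O.inner x z - O.inner y z := by
  rw [sub_eq_add_neg, ← neg_one_smul k y, O.inner_add_left, O.inner_smul_left]
  ring

lemma inner_add_right (x y z : A) : O.inner x (y + z) = O.inner x y + O.inner x z := by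
  rw [O.inner_comm, O.inner_add_left, O.inner_comm y, O.inner_comm z]

lemma N_add (a b : A) : O.N (a + b) = O.N a + O.N b + O.inner a b := by
  simp only [inner]
  ring

lemma eq_of_forall_inner_eq {a b : A} (h : ∀ z : A, O.inner a z = O.inner b z) : a = b :=
  sub_eq_zero.mp <| O.nondeg _ fun z => by
    rw [← inner, O.inner_sub_left, h, sub_self]

lemma N_e : O.N O.e = 1 := by
  have hsq : O.N O.e * (O.N O.e - 1) = 0 := by
    linear_combination congrArg O.N (O.mul_one' O.e) - O.N_mul O.e O.e
  rcases mul_eq_zero.mp hsq with h0 | h1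
  · exfalso
    have hN : ∀ a : A, O.N a = 0 := fun a => by rw [← O.mul_one' a, O.N_mul, h0, mul_zero]
    have hA : ∀ a : A, a = 0 := fun a => O.nondeg a fun b => by simp only [hN, sub_zero]
    have : Subsingleton A := subsingleton_of_forall_eq 0 hA
    simpa [Module.finrank_zero_of_subsingleton] using O.dim_eq
  · linear_combination h1

lemma inner_mul_mul_left (a b c : A) :
    O.inner (O.mul a b) (O.mul a c) = O.N a * O.inner b c := by
  simp only [inner, ← O.mul_add', O.N_mul]
  ring

lemma inner_mul_mul_right (a b c : A) :
    O.inner (O.mul b a) (O.mul c a) = O.N a * O.inner b c := by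
  simp only [inner, ← O.add_mul', O.N_mul]
  ring

/-- Linearization of `inner_mul_mul_left` at `e`: the adjoint of `L_x` is `L_x̄`. -/
lemma inner_mul_left_add_inner_mul_left (x y z : A) :
    O.inner (O.mul x y) z + O.inner y (O.mul x z) = O.inner x O.e * O.inner y z := by
  have h := O.inner_mul_mul_left (x + O.e) y z
  rw [O.add_mul', O.add_mul', O.one_mul', O.one_mul', O.inner_add_left,
    O.inner_add_right, O.inner_add_right, O.inner_mul_mul_left, O.N_add, O.N_e] at h
  linear_combination h

lemma inner_mul_right_add_inner_mul_right (x y z : A) :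
    O.inner (O.mul y x) z + O.inner y (O.mul z x) = O.inner x O.e * O.inner y z := by
  have h := O.inner_mul_mul_right (x + O.e) y z
  rw [O.mul_add', O.mul_add', O.mul_one', O.mul_one', O.inner_add_left,
    O.inner_add_right, O.inner_add_right, O.inner_mul_mul_right, O.N_add, O.N_e] at h
  linear_combination h

lemma mul_mul_self_right (y x : A) :
    O.mul (O.mul y x) x = O.inner x O.e • O.mul y x - O.N x • y :=
  O.eq_of_forall_inner_eq fun z => by
    rw [O.inner_sub_left, O.inner_smul_left, O.inner_smul_left]
    linear_combination O.inner_mul_right_add_inner_mul_right x (O.mul y x) z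
      - O.inner_mul_mul_right x y z

lemma mul_mul_add_mul_mul_right (y a b : A) :
    O.mul (O.mul y a) b + O.mul (O.mul y b) a
      = O.inner b O.e • O.mul y a + O.inner a O.e • O.mul y b - O.inner a b • y := by
  have h := O.mul_mul_self_right y (a + b)
  simp only [O.mul_add', O.add_mul', O.N_add, O.inner_add_left] at h
  linear_combination (norm := module)
    h - O.mul_mul_self_right y a - O.mul_mul_self_right y b

lemma malcev_eq (u v : A) :
    O.malcev u v
      = (2 : k) • O.mul u v - O.inner u O.e • v - O.inner v O.e • u
        + O.inner u v • O.e := by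
  have h := O.mul_mul_add_mul_mul_right O.e u v
  rw [O.one_mul', O.one_mul'] at h
  rw [malcev]
  linear_combination (norm := module) -h

lemma malcev_add_left (u v w : A) : O.malcev (u + v) w = O.malcev u w + O.malcev v w := by
  simp only [malcev, O.add_mul', O.mul_add']
  abel

lemma malcev_smul_left (t : k) (u w : A) : O.malcev (t • u) w = t • O.malcev u w := by
  simp only [malcev, O.smul_mul', O.mul_smul', smul_sub]

lemma malcev_e_left (w : A) : O.malcev O.e w = 0 := by
  rw [malcev, O.one_mul', O.mul_one', sub_self]

lemma malcev_malcev_of_inner_e_eq_zero {a b x : A} (ha : O.inner a O.e = 0)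
    (hb : O.inner b O.e = 0) (hx : O.inner x O.e = 0) :
    O.malcev (O.malcev x a) b = (4 : k) • O.mul (O.mul x a) b + (2 * O.inner a x) • b
      + (2 * O.inner (O.mul x a) b) • O.e := by
  have hxa : O.inner (O.mul x a) O.e = -O.inner a x := by
    have h := O.inner_mul_left_add_inner_mul_left x a O.e
    rw [O.mul_one', hx, zero_mul] at h
    linear_combination h
  simp only [O.malcev_eq x a, ha, hx, zero_smul, sub_zero]
  rw [O.malcev_add_left, O.malcev_smul_left, O.malcev_smul_left, O.malcev_e_left,
    O.malcev_eq, hxa, hb, O.inner_comm x a]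
  module

end OctonionAlgebra

theorem stmt3_general {k A : Type} [Field k] [AddCommGroup A] [Module k A]
    (O : OctonionAlgebra k A) :
    ∀ a b x : A, O.inner a O.e = 0 → O.inner b O.e = 0 → O.inner x O.e = 0 →
      O.malcev (O.malcev x a) b + O.malcev (O.malcev x b) a
        = (2 * O.inner a x) • b + (2 * O.inner b x) • a - (4 * O.inner a b) • x := by
  intro a b x ha hb hx
  have hRA := O.mul_mul_add_mul_mul_right x a b
  rw [ha, hb, zero_smul, zero_smul, zero_add, zero_sub] at hRA
  have hskew := O.inner_mul_left_add_inner_mul_left x a b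
  rw [hx, zero_mul, O.inner_comm a] at hskew
  rw [O.malcev_malcev_of_inner_e_eq_zero ha hb hx, O.malcev_malcev_of_inner_e_eq_zero hb ha hx]
  linear_combination (norm := module) (4 : k) • hRA + (2 : k) • (hskew • O.e)

/-- For pure octonions `a, b, x`:
`(x*a)*b + (x*b)*a = 2⟨a,x⟩b + 2⟨b,x⟩a - 4⟨a,b⟩x`. -/
theorem stmt3 {k A : Type} [Field k] [AddCommGroup A] [Module k A]
    (h2 : (2 : k) ≠ 0) (O : OctonionAlgebra k A) :
    ∀ a b x : A, O.inner a O.e = 0 → O.inner b O.e = 0 → O.inner x O.e = 0 →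
      O.malcev (O.malcev x a) b + O.malcev (O.malcev x b) a
        = (2 * O.inner a x) • b + (2 * O.inner b x) • a - (4 * O.inner a b) • x :=
  stmt3_general O
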